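/- Let φ and ψ be GFG-QPTL formulas. Then: (i) there exists a hyperassignment 𝔄 with 𝔄 ⊨^{EA} φ if and only if there exists a hyperassignment 𝔅 with 𝔅 ⊨^{AE} φ; (ii) (for every hyperassignment 𝔄, 𝔄 ⊨^{EA} φ implies 𝔄 ⊨^{EA} ψ) if and only if (for every hyperassignment 𝔄, 𝔄 ⊨^{AE} φ implies 𝔄 ⊨^{AE} ψ); (iii) (for every hyperassignment 𝔄, 𝔄 ⊨^{EA} φ iff 𝔄 ⊨^{EA} ψ) if and only if (for every hyperassignment 𝔄, 𝔄 ⊨^{AE} φ iff 𝔄 ⊨^{AE} ψ). (Corollary 2, Interpretation Invariance.) -/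

import Mathlib

namespace GFG

/-- Temporal valuations. -/
abbrev Val : Type := ℕ → Bool

/-- Assignments over a type `AP` of atomic propositions. -/
abbrev Asg (AP : Type*) : Type _ := AP → Val

section Hyper

variable {X : Type*}

/-- A hyperassignment: a nonempty set of subsets not containing `∅`. -/
def IsHyp (𝔄 : Set (Set X)) : Prop := 𝔄 ≠ ∅ ∧ ∅ ∉ 𝔄

/-- A choice function for `𝔄`. -/
def IsChoice (𝔄 : Set (Set X)) (ϑ : Set X → X) : Prop := ∀ W ∈ 𝔄, ϑ W ∈ W

/-- The dual hyperassignment. -/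
def hdual (𝔄 : Set (Set X)) : Set (Set X) :=
  { Y | ∃ ϑ : Set X → X, IsChoice 𝔄 ϑ ∧ Y = ϑ '' 𝔄 }

/-- The preorder `⊑` on hyperassignments. -/
def hle (𝔄₁ 𝔄₂ : Set (Set X)) : Prop := ∀ W₁ ∈ 𝔄₁, ∃ W₂ ∈ 𝔄₂, W₂ ⊆ W₁

/-- The equivalence `≡` on hyperassignments. -/
def heqv (𝔄₁ 𝔄₂ : Set (Set X)) : Prop := hle 𝔄₁ 𝔄₂ ∧ hle 𝔄₂ 𝔄₁

/-- `par 𝔄`: partitions of `𝔄` into two disjoint parts. -/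
def par (𝔄 : Set (Set X)) : Set (Set (Set X) × Set (Set X)) :=
  { pr | pr.1 ∪ pr.2 = 𝔄 ∧ Disjoint pr.1 pr.2 }

end Hyper

variable {AP : Type*}

/-- `a₁ ≈_p^{>k} a₂`. -/
def ApproxGT (p : AP) (k : ℕ) (a₁ a₂ : Asg AP) : Prop :=
  (∀ q, q ≠ p → a₁ q = a₂ q) ∧ ∀ t ≤ k, a₁ p t = a₂ p t

/-- `a₁ ≈_p^{≥k} a₂`. -/
def ApproxGE (p : AP) (k : ℕ) (a₁ a₂ : Asg AP) : Prop :=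
  (∀ q, q ≠ p → a₁ q = a₂ q) ∧ ∀ t < k, a₁ p t = a₂ p t

/-- Quantifier specifications `ς = (B,S)`. -/
abbrev Spec (AP : Type*) := Set AP × Set AP

/-- A `ς`-functor. -/
def IsSpecFunctor (ς : Spec AP) (F : Asg AP → Val) : Prop :=
  (∀ (k : ℕ) (a₁ a₂ : Asg AP), (∃ p ∈ ς.1, ApproxGT p k a₁ a₂) → F a₁ k = F a₂ k) ∧
  (∀ (k : ℕ) (a₁ a₂ : Asg AP), (∃ p ∈ ς.2, ApproxGE p k a₁ a₂) → F a₁ k = F a₂ k)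

variable [DecidableEq AP]

/-- `ext(a,F,p)`. -/
def extAsg (a : Asg AP) (F : Asg AP → Val) (p : AP) : Asg AP :=
  Function.update a p (F a)

/-- `ext(W,F,p)`. -/
def extSet (W : Set (Asg AP)) (F : Asg AP → Val) (p : AP) : Set (Asg AP) :=
  (fun a => extAsg a F p) '' W

/-- `ext_ς(𝔄,p)`. -/
def extSpec (ς : Spec AP) (𝔄 : Set (Set (Asg AP))) (p : AP) : Set (Set (Asg AP)) :=
  { Y | ∃ W ∈ 𝔄, ∃ F : Asg AP → Val, IsSpecFunctor ς F ∧ Y = extSet W F p }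

/-- Alternation flags. -/
inductive Flag : Type
  | EA : Flag
  | AE : Flag
  deriving DecidableEq

/-- The dual flag. -/
def Flag.dual : Flag → Flag
  | .EA => .AE
  | .AE => .EA

/-- GFG-QPTL formulas (LTL formulas abstracted as arbitrary sets of assignments). -/
inductive Formula (AP : Type*) : Type _ where
  | atom : Set (Asg AP) → Formula AP
  | neg : Formula AP → Formula AP
  | conj : Formula AP → Formula AP → Formula AP
  | disj : Formula AP → Formula AP → Formula AP
  | ex : AP → Spec AP → Formula AP → Formula AP
  | all : AP → Spec AP → Formula AP → Formula AP

/-- The alternating Hodges semantics `𝔄 ⊨^α φ`. -/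
def Sat : Formula AP → Flag → Set (Set (Asg AP)) → Prop
  | .atom Ψ, .EA, 𝔄 => ∃ W ∈ 𝔄, W ⊆ Ψ
  | .atom Ψ, .AE, 𝔄 => ∀ W ∈ 𝔄, W ∩ Ψ ≠ ∅
  | .neg φ, α, 𝔄 => ¬ Sat φ α.dual 𝔄
  | .conj φ₁ φ₂, .EA, 𝔄 =>
      ∀ pr ∈ par 𝔄, (pr.1 ≠ ∅ ∧ Sat φ₁ .EA pr.1) ∨ (pr.2 ≠ ∅ ∧ Sat φ₂ .EA pr.2)
  | .conj φ₁ φ₂, .AE, 𝔄 =>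
      ∀ pr ∈ par (hdual 𝔄), (pr.1 ≠ ∅ ∧ Sat φ₁ .EA pr.1) ∨ (pr.2 ≠ ∅ ∧ Sat φ₂ .EA pr.2)
  | .disj φ₁ φ₂, .AE, 𝔄 =>
      ∃ pr ∈ par 𝔄, (pr.1 ≠ ∅ → Sat φ₁ .AE pr.1) ∧ (pr.2 ≠ ∅ → Sat φ₂ .AE pr.2)
  | .disj φ₁ φ₂, .EA, 𝔄 =>
      ∃ pr ∈ par (hdual 𝔄), (pr.1 ≠ ∅ → Sat φ₁ .AE pr.1) ∧ (pr.2 ≠ ∅ → Sat φ₂ .AE pr.2)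
  | .ex p ς φ, .EA, 𝔄 => Sat φ .EA (extSpec ς 𝔄 p)
  | .ex p ς φ, .AE, 𝔄 => Sat φ .EA (extSpec ς (hdual 𝔄) p)
  | .all p ς φ, .AE, 𝔄 => Sat φ .AE (extSpec ς 𝔄 p)
  | .all p ς φ, .EA, 𝔄 => Sat φ .AE (extSpec ς (hdual 𝔄) p)

/-
Satisfaction is monotone along `⊑`: upwards for `EA`, downwards for `AE` (partitions of the larger
hyperassignment pull back along `⊑`). Moreover `hdual (hdual 𝔄) ≡ 𝔄`, because a set meets every
choice set of `𝔄` iff it contains a member of `𝔄`. Hence `hdual 𝔄 ⊨^ᾱ φ ↔ 𝔄 ⊨^α φ`: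
for atoms this is the choice-function duality between "some `W ⊆ Ψ`" and "every choice set meets
`Ψ`", and for a connective or quantifier the clause for one flag is the clause for the other
evaluated on the dual. As `hdual` preserves hyperassignments, every statement about `EA` transfers
to `AE` and back.
-/

section Hyper

variable {Y : Type*}

lemma inter_diff_mem_par (𝔄 T : Set (Set Y)) : (𝔄 ∩ T, 𝔄 \ T) ∈ par 𝔄 :=
  ⟨Set.inter_union_sdiff 𝔄 T, disjoint_inf_sdiff⟩

lemma hle.ne_empty {𝔄₁ 𝔄₂ : Set (Set Y)} (h : hle 𝔄₁ 𝔄₂) (h₁ : 𝔄₁ ≠ ∅) : 𝔄₂ ≠ ∅ := by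
  obtain ⟨W, hW⟩ := Set.nonempty_iff_ne_empty.mpr h₁
  obtain ⟨V, hV, -⟩ := h W hW
  exact Set.nonempty_iff_ne_empty.mp ⟨V, hV⟩

/-- The pulled-back first part consists of the sets of `𝔄₁` lying above some set of `pr.1`. -/
lemma hle.exists_par {𝔄₁ 𝔄₂ : Set (Set Y)} (h : hle 𝔄₁ 𝔄₂) {pr : Set (Set Y) × Set (Set Y)}
    (hpr : pr ∈ par 𝔄₂) : ∃ pr' ∈ par 𝔄₁, hle pr'.1 pr.1 ∧ hle pr'.2 pr.2 := by
  refine ⟨_, inter_diff_mem_par 𝔄₁ {W | ∃ V ∈ pr.1, V ⊆ W}, fun W hW => hW.2, ?_⟩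
  rintro W ⟨hW, hW₁⟩
  obtain ⟨V, hV, hVW⟩ := h W hW
  rw [← hpr.1] at hV
  exact hV.elim (fun hV₁ => absurd ⟨V, hV₁, hVW⟩ hW₁) fun hV₂ => ⟨V, hV₂, hVW⟩

lemma mem_hdual_inter_nonempty {𝔄 : Set (Set Y)} {Z W : Set Y} (hZ : Z ∈ hdual 𝔄)
    (hW : W ∈ 𝔄) : (Z ∩ W).Nonempty := by
  obtain ⟨ϑ, hϑ, rfl⟩ := hZ
  exact ⟨ϑ W, ⟨W, hW, rfl⟩, hϑ W hW⟩

variable [Nonempty Y]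

lemma exists_mem_hdual_subset_iff {𝔄 : Set (Set Y)} {S : Set Y} :
    (∃ Z ∈ hdual 𝔄, Z ⊆ S) ↔ ∀ W ∈ 𝔄, (W ∩ S).Nonempty := by
  classical
  constructor
  · rintro ⟨Z, hZ, hZS⟩ W hW
    obtain ⟨x, hxZ, hxW⟩ := mem_hdual_inter_nonempty hZ hW
    exact ⟨x, hxW, hZS hxZ⟩
  · intro h
    choose ϑ hϑ using h
    let θ : Set Y → Y := fun W => if hW : W ∈ 𝔄 then ϑ W hW else Classical.arbitrary Y
    have hθ : ∀ W (hW : W ∈ 𝔄), θ W = ϑ W hW := fun W hW => dif_pos hW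
    refine ⟨θ '' 𝔄, ⟨θ, fun W hW => ?_, rfl⟩, ?_⟩
    · exact hθ W hW ▸ (hϑ W hW).1
    · rintro _ ⟨W, hW, rfl⟩
      exact hθ W hW ▸ (hϑ W hW).2

lemma exists_subset_iff_forall_mem_hdual {𝔄 : Set (Set Y)} {S : Set Y} :
    (∃ W ∈ 𝔄, W ⊆ S) ↔ ∀ Z ∈ hdual 𝔄, (Z ∩ S).Nonempty := by
  constructor
  · rintro ⟨W, hW, hWS⟩ Z hZ
    exact (mem_hdual_inter_nonempty hZ hW).mono (Set.inter_subset_inter_right Z hWS)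
  · intro h
    by_contra hS
    obtain ⟨Z, hZ, hZS⟩ := exists_mem_hdual_subset_iff.mpr fun W hW =>
      Set.inter_compl_nonempty_iff.mpr fun hWS => hS ⟨W, hW, hWS⟩
    obtain ⟨x, hxZ, hxS⟩ := h Z hZ
    exact hZS hxZ hxS

lemma hle.hdual {𝔄₁ 𝔄₂ : Set (Set Y)} (h : hle 𝔄₁ 𝔄₂) : hle (hdual 𝔄₂) (hdual 𝔄₁) := by
  intro Z hZ
  refine exists_mem_hdual_subset_iff.mpr fun W hW => ?_
  obtain ⟨V, hV, hVW⟩ := h W hW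
  obtain ⟨x, hxZ, hxV⟩ := mem_hdual_inter_nonempty hZ hV
  exact ⟨x, hVW hxV, hxZ⟩

lemma heqv_hdual_hdual (𝔄 : Set (Set Y)) : heqv 𝔄 (hdual (hdual 𝔄)) :=
  ⟨fun _ hW => exists_mem_hdual_subset_iff.mpr fun _ hZ => mem_hdual_inter_nonempty hZ hW,
    fun _ hZ' => exists_subset_iff_forall_mem_hdual.mpr fun _ hZ =>
      Set.inter_comm _ _ ▸ mem_hdual_inter_nonempty hZ' hZ⟩

lemma IsHyp.hdual {𝔄 : Set (Set Y)} (h : IsHyp 𝔄) : IsHyp (hdual 𝔄) := by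
  refine ⟨Set.nonempty_iff_ne_empty.mp ?_, ?_⟩
  · have hmeets : ∀ W ∈ 𝔄, (W ∩ Set.univ).Nonempty := fun W hW => by
      rw [Set.inter_univ, Set.nonempty_iff_ne_empty]
      exact fun hW₀ => h.2 (hW₀ ▸ hW)
    obtain ⟨Z, hZ, -⟩ := exists_mem_hdual_subset_iff.mpr hmeets
    exact ⟨Z, hZ⟩
  · rintro ⟨ϑ, -, hϑ⟩
    exact h.1 (Set.image_eq_empty.mp hϑ.symm)

end Hyper

lemma hle.extSpec {ς : Spec AP} {p : AP} {𝔄₁ 𝔄₂ : Set (Set (Asg AP))} (h : hle 𝔄₁ 𝔄₂) :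
    hle (extSpec ς 𝔄₁ p) (extSpec ς 𝔄₂ p) := by
  rintro _ ⟨W, hW, F, hF, rfl⟩
  obtain ⟨V, hV, hVW⟩ := h W hW
  exact ⟨extSet V F p, ⟨V, hV, F, hF, rfl⟩, Set.image_mono hVW⟩

theorem sat_of_hle (φ : Formula AP) {𝔄₁ 𝔄₂ : Set (Set (Asg AP))} (h : hle 𝔄₁ 𝔄₂) :
    (Sat φ .EA 𝔄₁ → Sat φ .EA 𝔄₂) ∧ (Sat φ .AE 𝔄₂ → Sat φ .AE 𝔄₁) := by
  induction φ generalizing 𝔄₁ 𝔄₂ with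
  | atom Ψ =>
    refine ⟨fun ⟨W, hW, hWΨ⟩ => ?_, fun hsat W hW => ?_⟩
    · obtain ⟨V, hV, hVW⟩ := h W hW
      exact ⟨V, hV, hVW.trans hWΨ⟩
    · obtain ⟨V, hV, hVW⟩ := h W hW
      obtain ⟨x, hxV, hxΨ⟩ := Set.nonempty_iff_ne_empty.mpr (hsat V hV)
      exact Set.nonempty_iff_ne_empty.mp ⟨x, hVW hxV, hxΨ⟩
  | neg φ ih => exact ⟨mt (ih h).2, mt (ih h).1⟩
  | conj φ₁ φ₂ ih₁ ih₂ =>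
    have sat_EA : ∀ {𝔄₁ 𝔄₂ : Set (Set (Asg AP))}, hle 𝔄₁ 𝔄₂ →
        Sat (.conj φ₁ φ₂) .EA 𝔄₁ → Sat (.conj φ₁ φ₂) .EA 𝔄₂ := by
      intro 𝔄₁ 𝔄₂ h hsat pr hpr
      obtain ⟨pr', hpr', h₁, h₂⟩ := h.exists_par hpr
      exact (hsat pr' hpr').imp (fun hs => ⟨h₁.ne_empty hs.1, (ih₁ h₁).1 hs.2⟩)
        fun hs => ⟨h₂.ne_empty hs.1, (ih₂ h₂).1 hs.2⟩
    exact ⟨sat_EA h, sat_EA h.hdual⟩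
  | disj φ₁ φ₂ ih₁ ih₂ =>
    have sat_AE : ∀ {𝔄₁ 𝔄₂ : Set (Set (Asg AP))}, hle 𝔄₁ 𝔄₂ →
        Sat (.disj φ₁ φ₂) .AE 𝔄₂ → Sat (.disj φ₁ φ₂) .AE 𝔄₁ := by
      rintro 𝔄₁ 𝔄₂ h ⟨pr, hpr, hs₁, hs₂⟩
      obtain ⟨pr', hpr', h₁, h₂⟩ := h.exists_par hpr
      exact ⟨pr', hpr', fun hne => (ih₁ h₁).2 (hs₁ (h₁.ne_empty hne)),
        fun hne => (ih₂ h₂).2 (hs₂ (h₂.ne_empty hne))⟩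
    exact ⟨sat_AE h.hdual, sat_AE h⟩
  | ex p ς φ ih => exact ⟨(ih h.extSpec).1, (ih h.hdual.extSpec).1⟩
  | all p ς φ ih => exact ⟨(ih h.hdual.extSpec).2, (ih h.extSpec).2⟩

theorem sat_congr_of_heqv (φ : Formula AP) (α : Flag) {𝔄₁ 𝔄₂ : Set (Set (Asg AP))}
    (h : heqv 𝔄₁ 𝔄₂) : Sat φ α 𝔄₁ ↔ Sat φ α 𝔄₂ := by
  cases α
  · exact ⟨(sat_of_hle φ h.1).1, (sat_of_hle φ h.2).1⟩
  · exact ⟨(sat_of_hle φ h.2).2, (sat_of_hle φ h.1).2⟩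

theorem sat_hdual (φ : Formula AP) (α : Flag) (𝔄 : Set (Set (Asg AP))) :
    Sat φ α.dual (hdual 𝔄) ↔ Sat φ α 𝔄 := by
  induction φ generalizing α 𝔄 with
  | atom Ψ =>
    cases α
    · simp only [Flag.dual, Sat, exists_subset_iff_forall_mem_hdual, Set.nonempty_iff_ne_empty]
    · simp only [Flag.dual, Sat, exists_mem_hdual_subset_iff, Set.nonempty_iff_ne_empty]
  | neg φ ih => cases α <;> exact not_congr (ih _ 𝔄)
  | conj φ₁ φ₂ =>
    cases α
    · exact (sat_congr_of_heqv (.conj φ₁ φ₂) .EA (heqv_hdual_hdual 𝔄)).symm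
    · exact Iff.rfl
  | ex p ς φ =>
    cases α
    · exact (sat_congr_of_heqv (.ex p ς φ) .EA (heqv_hdual_hdual 𝔄)).symm
    · exact Iff.rfl
  | disj φ₁ φ₂ =>
    cases α
    · exact Iff.rfl
    · exact (sat_congr_of_heqv (.disj φ₁ φ₂) .AE (heqv_hdual_hdual 𝔄)).symm
  | all p ς φ =>
    cases α
    · exact Iff.rfl
    · exact (sat_congr_of_heqv (.all p ς φ) .AE (heqv_hdual_hdual 𝔄)).symm

theorem forall_sat_imp_of_dual {φ ψ : Formula AP} {α : Flag}
    (h : ∀ 𝔄, IsHyp 𝔄 → Sat φ α.dual 𝔄 → Sat ψ α.dual 𝔄) (𝔄 : Set (Set (Asg AP)))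
    (h𝔄 : IsHyp 𝔄) : Sat φ α 𝔄 → Sat ψ α 𝔄 := fun hφ =>
  (sat_hdual ψ α 𝔄).1 (h _ h𝔄.hdual ((sat_hdual φ α 𝔄).2 hφ))

/-- Corollary 2 (Interpretation Invariance). -/
theorem interpretation_invariance (φ ψ : Formula AP) :
    ((∃ 𝔄 : Set (Set (Asg AP)), IsHyp 𝔄 ∧ Sat φ .EA 𝔄) ↔
      (∃ 𝔅 : Set (Set (Asg AP)), IsHyp 𝔅 ∧ Sat φ .AE 𝔅)) ∧
    ((∀ 𝔄 : Set (Set (Asg AP)), IsHyp 𝔄 → Sat φ .EA 𝔄 → Sat ψ .EA 𝔄) ↔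
      (∀ 𝔄 : Set (Set (Asg AP)), IsHyp 𝔄 → Sat φ .AE 𝔄 → Sat ψ .AE 𝔄)) ∧
    ((∀ 𝔄 : Set (Set (Asg AP)), IsHyp 𝔄 → (Sat φ .EA 𝔄 ↔ Sat ψ .EA 𝔄)) ↔
      (∀ 𝔄 : Set (Set (Asg AP)), IsHyp 𝔄 → (Sat φ .AE 𝔄 ↔ Sat ψ .AE 𝔄))) := by
  refine ⟨⟨fun ⟨𝔄, h𝔄, hφ⟩ => ⟨hdual 𝔄, h𝔄.hdual, (sat_hdual φ .EA 𝔄).2 hφ⟩,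
      fun ⟨𝔅, h𝔅, hφ⟩ => ⟨hdual 𝔅, h𝔅.hdual, (sat_hdual φ .AE 𝔅).2 hφ⟩⟩,
    ⟨forall_sat_imp_of_dual (α := .AE), forall_sat_imp_of_dual (α := .EA)⟩, ⟨?_, ?_⟩⟩
  · exact fun h 𝔄 h𝔄 => ⟨forall_sat_imp_of_dual (α := .AE) (fun 𝔅 h𝔅 => (h 𝔅 h𝔅).1) 𝔄 h𝔄,
      forall_sat_imp_of_dual (α := .AE) (fun 𝔅 h𝔅 => (h 𝔅 h𝔅).2) 𝔄 h𝔄⟩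
  · exact fun h 𝔄 h𝔄 => ⟨forall_sat_imp_of_dual (α := .EA) (fun 𝔅 h𝔅 => (h 𝔅 h𝔅).1) 𝔄 h𝔄,
      forall_sat_imp_of_dual (α := .EA) (fun 𝔅 h𝔅 => (h 𝔅 h𝔅).2) 𝔄 h𝔄⟩

end GFG
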